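/- arXiv:2507.23561 — 2 statements merged into one kernel-verified Lean document; each statement's English description precedes it below -/
import Mathlib

section
/- Let m and p be positive integers with p dividing m. Then the image of G(m,p,2) in PGL₂(ℂ) equals the image of G(2m/gcd(p,2), 2, 2) in PGL₂(ℂ); equivalently, Z·G(m,p,2) = Z·G(2m/gcd(p,2), 2, 2) as subgroups of GL₂(ℂ), where Z is the subgroup of nonzero scalar matrices. -/
noncomputable section

namespace CPRG

/-- A monomial matrix: exactly one nonzero entry in each row and column. -/
def IsMonomialMat {n : ℕ} (A : Matrix (Fin n) (Fin n) ℂ) : Prop :=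
  ∃ σ : Equiv.Perm (Fin n), ∀ i j, A i j ≠ 0 ↔ j = σ i

/-- The underlying set of the imprimitive reflection group `G(m,p,n)`: monomial
matrices whose nonzero entries are `m`-th roots of unity and whose product of
nonzero entries is an `(m/p)`-th root of unity. (Since every row of a monomial
matrix has a single nonzero entry, this product equals `∏ i, ∑ j, A i j`.) -/
def GmpnSet (m p n : ℕ) : Set (Matrix.GeneralLinearGroup (Fin n) ℂ) :=
  {A | IsMonomialMat (A : Matrix (Fin n) (Fin n) ℂ) ∧
    (∀ i j, (A : Matrix (Fin n) (Fin n) ℂ) i j ≠ 0 →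
      ((A : Matrix (Fin n) (Fin n) ℂ) i j) ^ m = 1) ∧
    (∏ i, ∑ j, (A : Matrix (Fin n) (Fin n) ℂ) i j) ^ (m / p) = 1}

/-- The imprimitive complex reflection group `G(m,p,n)` as a subgroup of
`GL_n(ℂ)` (the set `GmpnSet m p n` is closed under the group operations, so the
subgroup it generates has exactly this set as underlying set). -/
def Gmpn (m p n : ℕ) : Subgroup (Matrix.GeneralLinearGroup (Fin n) ℂ) :=
  Subgroup.closure (GmpnSet m p n)

/-- The subgroup of nonzero scalar matrices in `GL_n(ℂ)`. -/
def scalarGL (n : ℕ) : Subgroup (Matrix.GeneralLinearGroup (Fin n) ℂ) :=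
  (Units.map (algebraMap ℂ (Matrix (Fin n) (Fin n) ℂ)).toMonoidHom).range

instance (n : ℕ) : (scalarGL n).Normal := by
  constructor
  rintro a ⟨c, rfl⟩ g
  set u := Units.map (algebraMap ℂ (Matrix (Fin n) (Fin n) ℂ)).toMonoidHom c with hu
  have hcomm : g * u = u * g := by
    ext : 1
    simp only [Units.val_mul, hu, Units.coe_map, RingHom.toMonoidHom_eq_coe,
      MonoidHom.coe_coe]
    exact (Algebra.commutes (c : ℂ) _).symm
  refine ⟨c, ?_⟩
  rw [← hu, hcomm, mul_inv_cancel_right]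



section Auxiliary

lemma rowsum_eq {A : Matrix (Fin 2) (Fin 2) ℂ} {σ : Equiv.Perm (Fin 2)}
    (h : ∀ i j, A i j ≠ 0 ↔ j = σ i) (i : Fin 2) : ∑ j, A i j = A i (σ i) := by
  refine Finset.sum_eq_single (σ i) (fun j _ hj => ?_) (by simp)
  by_contra h0
  exact hj ((h i j).mp h0)

/-- main complex-number existence lemma -/
lemma key_exists (m p : ℕ) (hm : 0 < m) (hp : 0 < p) (hpm : p ∣ m)
    (u v : ℂ) (hu : u ^ (2 * m / Nat.gcd p 2) = 1) (hv : v ^ (2 * m / Nat.gcd p 2) = 1)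
    (huv : (u * v) ^ (2 * m / Nat.gcd p 2 / 2) = 1) :
    ∃ c : ℂ, c ≠ 0 ∧ (c * u) ^ m = 1 ∧ (c * v) ^ m = 1 ∧
      (c * u * (c * v)) ^ (m / p) = 1 := by
  obtain ⟨k, hk⟩ := hpm
  have hk0 : 0 < k := by
    rcases Nat.eq_zero_or_pos k with h | h
    · rw [hk, h, mul_zero] at hm; exact absurd hm (lt_irrefl 0)
    · exact h
  have hmp : m / p = k := by rw [hk, Nat.mul_div_cancel_left _ hp]
  have hd : Nat.gcd p 2 = 1 ∨ Nat.gcd p 2 = 2 :=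
    (Nat.dvd_prime Nat.prime_two).mp (Nat.gcd_dvd_right p 2)
  rcases hd with hd | hd
  · -- p odd
    have hpodd : ¬ 2 ∣ p := by
      intro h2
      have := Nat.dvd_gcd h2 (dvd_refl 2)
      rw [hd] at this
      omega
    have hm' : 2 * m / Nat.gcd p 2 = 2 * m := by rw [hd, Nat.div_one]
    have hm'2 : 2 * m / Nat.gcd p 2 / 2 = m := by rw [hm']; omega
    rw [hm'] at hu hv
    rw [hm'2] at huv
    set ε := u ^ m with hε
    have hε2 : ε * ε = 1 := by
      rw [hε, ← pow_add]
      rw [show m + m = 2 * m by ring]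
      exact hu
    have hε0 : ε ≠ 0 := by
      intro h; rw [h, zero_mul] at hε2; exact zero_ne_one hε2
    have huv1 : ε * v ^ m = 1 := by rw [hε, ← mul_pow]; exact huv
    have hvm : v ^ m = ε := by
      apply mul_left_cancel₀ hε0
      rw [huv1, hε2]
    have huv0 : u * v ≠ 0 := by
      intro h; rw [h, zero_pow hm.ne'] at huv; exact zero_ne_one huv
    set w := ((u * v) ^ k)⁻¹ with hw
    have hwk0 : (u * v) ^ k ≠ 0 := pow_ne_zero _ huv0
    have hw0 : w ≠ 0 := inv_ne_zero hwk0
    have hwp : w ^ p = 1 := by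
      rw [hw, inv_pow, ← pow_mul, show k * p = m by rw [hk]; ring, huv, inv_one]
    obtain ⟨s, hs⟩ : ∃ s, p = 2 * s + 1 := ⟨p / 2, by omega⟩
    set t := s + 1 with hts
    have ht : 2 * t = p + 1 := by omega
    obtain ⟨c, hc⟩ := IsAlgClosed.exists_pow_nat_eq (w ^ t * ε) hk0
    have hctgt : w ^ t * ε ≠ 0 := mul_ne_zero (pow_ne_zero _ hw0) hε0
    have hc0 : c ≠ 0 := by
      intro h; rw [h, zero_pow hk0.ne'] at hc; exact hctgt hc.symm
    have hεp : ε ^ p = ε := by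
      rw [hs, pow_succ, pow_mul, show ε ^ 2 = 1 by rw [sq]; exact hε2, one_pow, one_mul]
    have hcm : c ^ m = ε := by
      have h1 : c ^ m = (c ^ k) ^ p := by rw [← pow_mul, show k * p = m by rw [hk]; ring]
      rw [h1, hc, mul_pow, ← pow_mul, show t * p = p * t by ring, pow_mul, hwp, one_pow,
        one_mul, hεp]
    refine ⟨c, hc0, ?_, ?_, ?_⟩
    · rw [mul_pow, hcm, ← hε, hε2]
    · rw [mul_pow, hcm, hvm, hε2]
    · rw [hmp, show c * u * (c * v) = c ^ 2 * (u * v) by ring, mul_pow, ← pow_mul,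
        show 2 * k = k * 2 by ring, pow_mul, hc, mul_pow, ← pow_mul,
        show t * 2 = p + 1 by omega, pow_succ, hwp, one_mul,
        show ε ^ 2 = 1 by rw [sq]; exact hε2, mul_one]
      rw [hw]
      exact inv_mul_cancel₀ hwk0
  · -- p even
    have h2p : 2 ∣ p := hd ▸ Nat.gcd_dvd_left p 2
    obtain ⟨e, he⟩ := h2p
    have he0 : 0 < e := by omega
    have hm' : 2 * m / Nat.gcd p 2 = m := by rw [hd]; omega
    have hm'2 : 2 * m / Nat.gcd p 2 / 2 = e * k := by
      rw [hm', hk, he, show 2 * e * k = 2 * (e * k) by ring]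
      omega
    rw [hm'] at hu hv
    rw [hm'2] at huv
    have hu0 : u ≠ 0 := by
      intro h; rw [h, zero_pow hm.ne'] at hu; exact zero_ne_one hu
    have hv0 : v ≠ 0 := by
      intro h; rw [h, zero_pow hm.ne'] at hv; exact zero_ne_one hv
    have huv0 : u * v ≠ 0 := mul_ne_zero hu0 hv0
    have hwk0 : (u * v) ^ k ≠ 0 := pow_ne_zero _ huv0
    obtain ⟨c, hc⟩ := IsAlgClosed.exists_pow_nat_eq (((u * v) ^ k)⁻¹) (by omega : 0 < 2 * k)
    have hc0 : c ≠ 0 := by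
      intro h; rw [h, zero_pow (by omega : (2*k) ≠ 0)] at hc
      exact inv_ne_zero hwk0 hc.symm
    have hcm : c ^ m = 1 := by
      have h1 : c ^ m = (c ^ (2 * k)) ^ e := by
        rw [← pow_mul, show 2 * k * e = m by rw [hk, he]; ring]
      rw [h1, hc, inv_pow, ← pow_mul, show k * e = e * k by ring, huv, inv_one]
    refine ⟨c, hc0, ?_, ?_, ?_⟩
    · rw [mul_pow, hcm, hu, one_mul]
    · rw [mul_pow, hcm, hv, one_mul]
    · rw [hmp, show c * u * (c * v) = c ^ 2 * (u * v) by ring, mul_pow, ← pow_mul,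
        show 2 * k = 2 * k by rfl, hc, inv_mul_cancel₀ hwk0]


/-- the scalar unit -/
def sc (c : ℂˣ) : Matrix.GeneralLinearGroup (Fin 2) ℂ :=
  Units.map (algebraMap ℂ (Matrix (Fin 2) (Fin 2) ℂ)).toMonoidHom c

lemma sc_mem (c : ℂˣ) : sc c ∈ scalarGL 2 := ⟨c, rfl⟩

lemma sc_mul_coe (c : ℂˣ) (B : Matrix.GeneralLinearGroup (Fin 2) ℂ) :
    ((sc c * B : Matrix.GeneralLinearGroup (Fin 2) ℂ) : Matrix (Fin 2) (Fin 2) ℂ)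
      = (c : ℂ) • (B : Matrix (Fin 2) (Fin 2) ℂ) := by
  show (sc c : Matrix (Fin 2) (Fin 2) ℂ) * (B : Matrix (Fin 2) (Fin 2) ℂ) = _
  rw [show (sc c : Matrix (Fin 2) (Fin 2) ℂ) = algebraMap ℂ _ (c : ℂ) from rfl,
    Algebra.algebraMap_eq_smul_one, smul_mul_assoc, one_mul]

lemma subset_fwd (m p : ℕ) (hm : 0 < m) (hp : 0 < p) (hpm : p ∣ m) :
    GmpnSet m p 2 ⊆ GmpnSet (2 * m / Nat.gcd p 2) 2 2 := by
  obtain ⟨k, hk⟩ := hpm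
  have hmp : m / p = k := by rw [hk, Nat.mul_div_cancel_left _ hp]
  have hd : Nat.gcd p 2 = 1 ∨ Nat.gcd p 2 = 2 :=
    (Nat.dvd_prime Nat.prime_two).mp (Nat.gcd_dvd_right p 2)
  have hdvd1 : m ∣ 2 * m / Nat.gcd p 2 := by
    rcases hd with hd | hd
    · rw [hd, Nat.div_one]; exact ⟨2, by ring⟩
    · rw [hd, show 2 * m / 2 = m by omega]
  have hdvd2 : m / p ∣ 2 * m / Nat.gcd p 2 / 2 := by
    rcases hd with hd | hd
    · rw [hd, Nat.div_one, show 2 * m / 2 = m by omega, hmp, hk]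
      exact ⟨p, by ring⟩
    · have h2p : 2 ∣ p := hd ▸ Nat.gcd_dvd_left p 2
      obtain ⟨e, he⟩ := h2p
      rw [hd, show 2 * m / 2 = m by omega, hmp, hk, he,
        show 2 * e * k / 2 = e * k by rw [mul_assoc]; omega]
      exact ⟨e, by ring⟩
  rintro A ⟨hmono, hent, hprod⟩
  obtain ⟨r, hr⟩ := hdvd1
  obtain ⟨r2, hr2⟩ := hdvd2
  refine ⟨hmono, fun i j h0 => ?_, ?_⟩
  · rw [hr, pow_mul, hent i j h0, one_pow]
  · rw [hr2, pow_mul, hprod, one_pow]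

lemma subset_rev (m p : ℕ) (hm : 0 < m) (hp : 0 < p) (hpm : p ∣ m) :
    ∀ B ∈ GmpnSet (2 * m / Nat.gcd p 2) 2 2, B ∈ scalarGL 2 ⊔ Gmpn m p 2 := by
  rintro B ⟨⟨σ, hσ⟩, hent, hprod⟩
  set M : Matrix (Fin 2) (Fin 2) ℂ := (B : Matrix (Fin 2) (Fin 2) ℂ) with hM
  have hu0 : M 0 (σ 0) ≠ 0 := (hσ 0 (σ 0)).mpr rfl
  have hv0 : M 1 (σ 1) ≠ 0 := (hσ 1 (σ 1)).mpr rfl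
  have hprod' : (M 0 (σ 0) * M 1 (σ 1)) ^ (2 * m / Nat.gcd p 2 / 2) = 1 := by
    rw [Fin.prod_univ_two, rowsum_eq hσ 0, rowsum_eq hσ 1] at hprod
    exact hprod
  obtain ⟨c, hc0, hcu, hcv, hcuv⟩ := key_exists m p hm hp hpm _ _
    (hent 0 (σ 0) hu0) (hent 1 (σ 1) hv0) hprod'
  set cu : ℂˣ := Units.mk0 c hc0 with hcu'
  have hAcoe : ((sc cu * B : Matrix.GeneralLinearGroup (Fin 2) ℂ) :
      Matrix (Fin 2) (Fin 2) ℂ) = c • M := sc_mul_coe cu B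
  have hA : sc cu * B ∈ GmpnSet m p 2 := by
    refine ⟨⟨σ, fun i j => ?_⟩, fun i j h0 => ?_, ?_⟩
    · rw [hAcoe, Matrix.smul_apply, smul_eq_mul, mul_ne_zero_iff]
      constructor
      · rintro ⟨-, h⟩; exact (hσ i j).mp h
      · intro h; exact ⟨hc0, (hσ i j).mpr h⟩
    · rw [hAcoe] at h0 ⊢
      rw [Matrix.smul_apply, smul_eq_mul] at h0 ⊢
      have hB0 : M i j ≠ 0 := fun h => h0 (by rw [h, mul_zero])
      have hj : j = σ i := (hσ i j).mp hB0
      subst hj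
      fin_cases i
      · exact hcu
      · exact hcv
    · have hsum : ∀ i, ∑ j, ((sc cu * B : Matrix.GeneralLinearGroup (Fin 2) ℂ) :
          Matrix (Fin 2) (Fin 2) ℂ) i j = c * M i (σ i) := by
        intro i
        rw [hAcoe]
        simp only [Matrix.smul_apply, smul_eq_mul, ← Finset.mul_sum]
        rw [rowsum_eq hσ i]
      rw [Fin.prod_univ_two, hsum 0, hsum 1]
      exact hcuv
  have hBeq : B = (sc cu)⁻¹ * (sc cu * B) := by group
  rw [hBeq]
  exact mul_mem (Subgroup.mem_sup_left (inv_mem (sc_mem cu)))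
    (Subgroup.mem_sup_right (Subgroup.subset_closure hA))

end Auxiliary

/-- `G(m,p,2)` and `G(2m/gcd(p,2),2,2)` have the same image in
`PGL₂(ℂ)`; equivalently `Z·G(m,p,2) = Z·G(2m/gcd(p,2),2,2)` in `GL₂(ℂ)`. -/
theorem statement5 (m p : ℕ) (hm : 0 < m) (hp : 0 < p) (hpm : p ∣ m) :
    (Gmpn m p 2).map (QuotientGroup.mk' (scalarGL 2)) =
      (Gmpn (2 * m / Nat.gcd p 2) 2 2).map (QuotientGroup.mk' (scalarGL 2)) ∧
    scalarGL 2 ⊔ Gmpn m p 2 = scalarGL 2 ⊔ Gmpn (2 * m / Nat.gcd p 2) 2 2 := by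
  set f := QuotientGroup.mk' (scalarGL 2) with hf
  have hfwd : Gmpn m p 2 ≤ Gmpn (2 * m / Nat.gcd p 2) 2 2 :=
    Subgroup.closure_mono (subset_fwd m p hm hp hpm)
  have hrev : Gmpn (2 * m / Nat.gcd p 2) 2 2 ≤ scalarGL 2 ⊔ Gmpn m p 2 :=
    (Subgroup.closure_le _).mpr (subset_rev m p hm hp hpm)
  have h2 : scalarGL 2 ⊔ Gmpn m p 2 = scalarGL 2 ⊔ Gmpn (2 * m / Nat.gcd p 2) 2 2 := by
    apply le_antisymm
    · exact sup_le le_sup_left (hfwd.trans le_sup_right)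
    · exact sup_le le_sup_left hrev
  refine ⟨?_, h2⟩
  have hZ : (scalarGL 2).map f = ⊥ := by
    rw [Subgroup.map_eq_bot_iff, hf, QuotientGroup.ker_mk']
  have key : ∀ H : Subgroup (Matrix.GeneralLinearGroup (Fin 2) ℂ),
      H.map f = (scalarGL 2 ⊔ H).map f := by
    intro H
    rw [Subgroup.map_sup, hZ, bot_sup_eq]
  rw [key (Gmpn m p 2), key (Gmpn (2 * m / Nat.gcd p 2) 2 2), h2]

end CPRG
end
end

section
/- Let n ≥ 3 and let m, p, m', p' be positive integers with p dividing m and p' dividing m'. If the image of G(m,p,n) in PGL_n(ℂ) equals the image of G(m',p',n) in PGL_n(ℂ), then m = m' and gcd(p,n) = gcd(p',n). -/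
noncomputable section

namespace CPRG

open Matrix in
private lemma row_sum {n : ℕ} {A : Matrix (Fin n) (Fin n) ℂ} {σ : Equiv.Perm (Fin n)}
    (hA : ∀ i j, A i j ≠ 0 ↔ j = σ i) (i : Fin n) :
    ∑ j, A i j = A i (σ i) := by
  refine Finset.sum_eq_single (σ i) (fun j _ hj => ?_)
    (fun h => absurd (Finset.mem_univ _) h)
  by_contra h
  exact hj ((hA i j).1 h)

open Matrix in
/-- `GmpnSet` is closed under the group operations. -/
def GmpnSub (m p n : ℕ) : Subgroup (Matrix.GeneralLinearGroup (Fin n) ℂ) where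
  carrier := GmpnSet m p n
  one_mem' := by
    refine ⟨⟨Equiv.refl _, fun i j => ?_⟩, fun i j hij => ?_, ?_⟩
    · simp only [Units.val_one, Matrix.one_apply, Equiv.refl_apply]
      by_cases h : i = j <;> simp [h, eq_comm]
    · simp only [Units.val_one, Matrix.one_apply, ne_eq, ite_eq_right_iff,
        Classical.not_imp] at hij
      simp [Units.val_one, Matrix.one_apply, hij.1]
    · have : ∀ i : Fin n, ∑ j, (1 : Matrix (Fin n) (Fin n) ℂ) i j = 1 := by
        intro i; simp [Matrix.one_apply]
      simp only [Units.val_one, this, Finset.prod_const_one, one_pow]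
  mul_mem' := by
    rintro A B ⟨⟨σ, hσ⟩, hrA, hpA⟩ ⟨⟨τ, hτ⟩, hrB, hpB⟩
    have key : ∀ i j, ((A * B : Matrix.GeneralLinearGroup (Fin n) ℂ) :
        Matrix (Fin n) (Fin n) ℂ) i j
        = (A : Matrix (Fin n) (Fin n) ℂ) i (σ i) *
          (B : Matrix (Fin n) (Fin n) ℂ) (σ i) j := by
      intro i j
      rw [Units.val_mul, Matrix.mul_apply]
      refine Finset.sum_eq_single (σ i) (fun k _ hk => ?_)
        (fun h => absurd (Finset.mem_univ _) h)
      have : (A : Matrix (Fin n) (Fin n) ℂ) i k = 0 := by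
        by_contra hc; exact hk ((hσ i k).1 hc)
      rw [this, zero_mul]
    have hmon : ∀ i j, ((A * B : Matrix.GeneralLinearGroup (Fin n) ℂ) :
        Matrix (Fin n) (Fin n) ℂ) i j ≠ 0 ↔ j = (σ.trans τ) i := by
      intro i j
      rw [key]
      constructor
      · intro h
        exact (hτ _ _).1 (right_ne_zero_of_mul h)
      · rintro rfl
        exact mul_ne_zero ((hσ i (σ i)).2 rfl) ((hτ (σ i) (τ (σ i))).2 rfl)
    refine ⟨⟨σ.trans τ, hmon⟩, fun i j hij => ?_, ?_⟩
    · rw [key] at hij ⊢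
      rw [mul_pow, hrA i (σ i) (left_ne_zero_of_mul hij),
        hrB (σ i) j (right_ne_zero_of_mul hij), one_mul]
    · have hsum : ∀ i, ∑ j, ((A * B : Matrix.GeneralLinearGroup (Fin n) ℂ) :
          Matrix (Fin n) (Fin n) ℂ) i j
          = (A : Matrix (Fin n) (Fin n) ℂ) i (σ i) *
            (B : Matrix (Fin n) (Fin n) ℂ) (σ i) (τ (σ i)) := by
        intro i
        rw [row_sum hmon i, key]
        rfl
      have h1 : ∏ i, ∑ j, ((A * B : Matrix.GeneralLinearGroup (Fin n) ℂ) :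
          Matrix (Fin n) (Fin n) ℂ) i j
          = (∏ i, (A : Matrix (Fin n) (Fin n) ℂ) i (σ i)) *
            ∏ i, (B : Matrix (Fin n) (Fin n) ℂ) i (τ i) := by
        rw [Finset.prod_congr rfl (fun i _ => hsum i), Finset.prod_mul_distrib]
        congr 1
        exact Equiv.prod_comp σ (fun k => (B : Matrix (Fin n) (Fin n) ℂ) k (τ k))
      have h2 : ∏ i, (A : Matrix (Fin n) (Fin n) ℂ) i (σ i)
          = ∏ i, ∑ j, (A : Matrix (Fin n) (Fin n) ℂ) i j :=
        (Finset.prod_congr rfl (fun i _ => row_sum hσ i)).symm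
      have h3 : ∏ i, (B : Matrix (Fin n) (Fin n) ℂ) i (τ i)
          = ∏ i, ∑ j, (B : Matrix (Fin n) (Fin n) ℂ) i j :=
        (Finset.prod_congr rfl (fun i _ => row_sum hτ i)).symm
      rw [h1, h2, h3, mul_pow, hpA, hpB, one_mul]
  inv_mem' := by
    rintro A ⟨⟨σ, hσ⟩, hrA, hpA⟩
    set B : Matrix (Fin n) (Fin n) ℂ :=
      Matrix.of (fun i j => if i = σ j then ((A : Matrix (Fin n) (Fin n) ℂ) j i)⁻¹ else 0)
      with hBdef
    have hBapp : ∀ i j, B i j =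
        if i = σ j then ((A : Matrix (Fin n) (Fin n) ℂ) j i)⁻¹ else 0 := fun i j => rfl
    have hAB : (A : Matrix (Fin n) (Fin n) ℂ) * B = 1 := by
      ext i j
      rw [Matrix.mul_apply, Matrix.one_apply]
      rw [Finset.sum_eq_single (σ j) (fun k _ hk => ?_)
        (fun h => absurd (Finset.mem_univ _) h)]
      · rw [hBapp, if_pos rfl]
        by_cases hij : i = j
        · subst hij
          rw [mul_inv_cancel₀ ((hσ i (σ i)).2 rfl), if_pos rfl]
        · have : (A : Matrix (Fin n) (Fin n) ℂ) i (σ j) = 0 := by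
            by_contra hc
            exact hij (σ.injective ((hσ i (σ j)).1 hc)).symm
          rw [this, zero_mul, if_neg hij]
      · rw [hBapp, if_neg hk, mul_zero]
    have hinv : ((A⁻¹ : Matrix.GeneralLinearGroup (Fin n) ℂ) :
        Matrix (Fin n) (Fin n) ℂ) = B := by
      rw [Matrix.coe_units_inv, Matrix.inv_eq_right_inv hAB]
    have hmon : ∀ i j, B i j ≠ 0 ↔ j = σ.symm i := by
      intro i j
      rw [hBapp]
      constructor
      · intro h
        by_cases hc : i = σ j
        · rw [hc, Equiv.symm_apply_apply]
        · rw [if_neg hc] at h; exact absurd rfl h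
      · rintro rfl
        rw [if_pos (σ.apply_symm_apply i).symm]
        exact inv_ne_zero ((hσ (σ.symm i) i).2 (σ.apply_symm_apply i).symm)
    refine ⟨⟨σ.symm, by rw [hinv]; exact hmon⟩, fun i j hij => ?_, ?_⟩
    · rw [hinv] at hij ⊢
      have hj : j = σ.symm i := (hmon i j).1 hij
      subst hj
      rw [hBapp, if_pos (σ.apply_symm_apply i).symm] at hij ⊢
      rw [inv_pow, hrA (σ.symm i) i ((hσ (σ.symm i) i).2 (σ.apply_symm_apply i).symm), inv_one]
    · have hs : ∀ i, ∑ j, ((A⁻¹ : Matrix.GeneralLinearGroup (Fin n) ℂ) :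
          Matrix (Fin n) (Fin n) ℂ) i j
          = ((A : Matrix (Fin n) (Fin n) ℂ) (σ.symm i) i)⁻¹ := by
        intro i
        rw [hinv, row_sum hmon i, hBapp, if_pos (σ.apply_symm_apply i).symm]
      have h1 : ∏ i, ∑ j, ((A⁻¹ : Matrix.GeneralLinearGroup (Fin n) ℂ) :
          Matrix (Fin n) (Fin n) ℂ) i j
          = (∏ i, (A : Matrix (Fin n) (Fin n) ℂ) i (σ i))⁻¹ := by
        rw [Finset.prod_congr rfl (fun i _ => hs i), ← Finset.prod_inv_distrib]
        refine (Equiv.prod_comp σ.symm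
          (fun k => ((A : Matrix (Fin n) (Fin n) ℂ) k (σ k))⁻¹)).symm.trans ?_ |>.symm
        exact Finset.prod_congr rfl (fun i _ => by rw [σ.apply_symm_apply])
      have h2 : ∏ i, (A : Matrix (Fin n) (Fin n) ℂ) i (σ i)
          = ∏ i, ∑ j, (A : Matrix (Fin n) (Fin n) ℂ) i j :=
        (Finset.prod_congr rfl (fun i _ => row_sum hσ i)).symm
      rw [h1, h2, inv_pow, hpA, inv_one]


lemma Gmpn_eq (m p n : ℕ) : Gmpn m p n = GmpnSub m p n :=
  Subgroup.closure_eq (GmpnSub m p n)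

private lemma ne_zero_of_pow_eq_one {x : ℂ} {m : ℕ} (hm : 0 < m) (h : x ^ m = 1) :
    x ≠ 0 := fun h0 => by simp [h0, zero_pow hm.ne'] at h

/-- A diagonal matrix with nonzero entries, as an element of `GL_n(ℂ)`. -/
def diagUnit {n : ℕ} (d : Fin n → ℂ) (hd : ∀ i, d i ≠ 0) :
    Matrix.GeneralLinearGroup (Fin n) ℂ where
  val := Matrix.diagonal d
  inv := Matrix.diagonal (fun i => (d i)⁻¹)
  val_inv := by
    have hfun : (fun i => d i * (d i)⁻¹) = fun _ : Fin n => (1 : ℂ) :=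
      funext fun i => mul_inv_cancel₀ (hd i)
    rw [Matrix.diagonal_mul_diagonal, hfun, Matrix.diagonal_one]
  inv_val := by
    have hfun : (fun i => (d i)⁻¹ * d i) = fun _ : Fin n => (1 : ℂ) :=
      funext fun i => inv_mul_cancel₀ (hd i)
    rw [Matrix.diagonal_mul_diagonal, hfun, Matrix.diagonal_one]

lemma diagUnit_coe {n : ℕ} (d : Fin n → ℂ) (hd : ∀ i, d i ≠ 0) :
    ((diagUnit d hd : Matrix.GeneralLinearGroup (Fin n) ℂ) : Matrix (Fin n) (Fin n) ℂ)
      = Matrix.diagonal d := rfl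

lemma diag_row_sum {n : ℕ} (d : Fin n → ℂ) (i : Fin n) :
    ∑ j, Matrix.diagonal d i j = d i := by
  rw [Finset.sum_eq_single i (fun j _ hj => Matrix.diagonal_apply_ne' d hj)
    (fun h => absurd (Finset.mem_univ _) h), Matrix.diagonal_apply_eq]

lemma diag_mem {m p n : ℕ} {d : Fin n → ℂ} (hd : ∀ i, d i ≠ 0)
    (h1 : ∀ i, d i ^ m = 1) (h2 : (∏ i, d i) ^ (m / p) = 1) :
    diagUnit d hd ∈ GmpnSub m p n := by
  refine ⟨⟨Equiv.refl _, fun i j => ?_⟩, fun i j hij => ?_, ?_⟩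
  · rw [diagUnit_coe]
    constructor
    · intro hne
      by_contra hij
      exact hne (Matrix.diagonal_apply_ne' d hij)
    · intro hj
      rw [hj, Equiv.refl_apply, Matrix.diagonal_apply_eq]
      exact hd i
  · rw [diagUnit_coe] at hij ⊢
    by_cases hji : i = j
    · subst hji; rw [Matrix.diagonal_apply_eq]; exact h1 i
    · exact absurd (Matrix.diagonal_apply_ne d hji) hij
  · rw [diagUnit_coe, Finset.prod_congr rfl (fun i _ => diag_row_sum d i)]
    exact h2

lemma scalar_coe {n : ℕ} (c : ℂˣ) :
    ((Units.map (algebraMap ℂ (Matrix (Fin n) (Fin n) ℂ)).toMonoidHom c :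
      Matrix.GeneralLinearGroup (Fin n) ℂ) : Matrix (Fin n) (Fin n) ℂ)
      = Matrix.diagonal (fun _ => (c : ℂ)) := rfl

lemma sup_eq {n m p m' p' : ℕ}
    (h : (Gmpn m p n).map (QuotientGroup.mk' (scalarGL n)) =
      (Gmpn m' p' n).map (QuotientGroup.mk' (scalarGL n))) :
    Gmpn m p n ⊔ scalarGL n = Gmpn m' p' n ⊔ scalarGL n := by
  have h2 := congrArg (Subgroup.comap (QuotientGroup.mk' (scalarGL n))) h
  rwa [Subgroup.comap_map_eq, Subgroup.comap_map_eq, QuotientGroup.ker_mk'] at h2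

lemma diag_extract {m p n : ℕ} {d : Fin n → ℂ} (hd : ∀ i, d i ≠ 0)
    (h : diagUnit d hd ∈ Gmpn m p n ⊔ scalarGL n) :
    ∃ (c : ℂ) (ζ : Fin n → ℂ), c ≠ 0 ∧ (∀ i, ζ i ^ m = 1) ∧
      (∏ i, ζ i) ^ (m / p) = 1 ∧ ∀ i, d i = c * ζ i := by
  rw [← SetLike.mem_coe, Subgroup.mul_normal] at h
  obtain ⟨A, hA, z, hz, hAz⟩ := h
  obtain ⟨c, rfl⟩ := hz
  dsimp only at hAz
  rw [Gmpn_eq] at hA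
  obtain ⟨-, hroots, hprod⟩ := hA
  have hmul : (A : Matrix (Fin n) (Fin n) ℂ) * Matrix.diagonal (fun _ => (c : ℂ))
      = Matrix.diagonal d := by
    rw [← scalar_coe c, ← Units.val_mul, hAz, diagUnit_coe]
  have hA' : ∀ i j, (A : Matrix (Fin n) (Fin n) ℂ) i j
      = Matrix.diagonal d i j * (c : ℂ)⁻¹ := by
    intro i j
    have h' := congrArg (fun M => M i j) hmul
    simp only [Matrix.mul_diagonal] at h'
    rw [← h', mul_assoc, mul_inv_cancel₀ (Units.ne_zero c), mul_one]
  refine ⟨(c : ℂ), fun i => d i * (c : ℂ)⁻¹, Units.ne_zero c, ?_, ?_, ?_⟩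
  · intro i
    have hAii : (A : Matrix (Fin n) (Fin n) ℂ) i i = d i * (c : ℂ)⁻¹ := by
      rw [hA' i i, Matrix.diagonal_apply_eq]
    have hne : (A : Matrix (Fin n) (Fin n) ℂ) i i ≠ 0 := by
      rw [hAii]
      exact mul_ne_zero (hd i) (inv_ne_zero (Units.ne_zero c))
    have := hroots i i hne
    rwa [hAii] at this
  · have hsum : ∀ i, ∑ j, (A : Matrix (Fin n) (Fin n) ℂ) i j = d i * (c : ℂ)⁻¹ := by
      intro i
      rw [Finset.sum_congr rfl (fun j _ => hA' i j), ← Finset.sum_mul, diag_row_sum]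
    rw [← Finset.prod_congr rfl (fun i _ => hsum i)]
    exact hprod
  · intro i
    rw [← mul_assoc, mul_comm (c : ℂ) (d i), mul_assoc,
      mul_inv_cancel₀ (Units.ne_zero c), mul_one]

lemma prod_single {n : ℕ} (i₀ : Fin n) (a b : ℂ) :
    ∏ i, (if i = i₀ then a else b) = a * b ^ (n - 1) := by
  rw [← Finset.mul_prod_erase Finset.univ _ (Finset.mem_univ i₀), if_pos rfl]
  congr 1
  rw [Finset.prod_congr rfl (fun i hi => if_neg (Finset.ne_of_mem_erase hi)),
    Finset.prod_const, Finset.card_erase_of_mem (Finset.mem_univ i₀),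
    Finset.card_univ, Fintype.card_fin]

lemma prod_pair {n : ℕ} {i₀ i₁ : Fin n} (hne : i₀ ≠ i₁) (a b : ℂ) :
    ∏ i, (if i = i₀ then a else if i = i₁ then b else 1) = a * b := by
  rw [← Finset.mul_prod_erase Finset.univ _ (Finset.mem_univ i₀), if_pos rfl]
  congr 1
  rw [← Finset.mul_prod_erase _ _
      (Finset.mem_erase.mpr ⟨hne.symm, Finset.mem_univ i₁⟩),
    if_neg hne.symm, if_pos rfl]
  rw [Finset.prod_eq_one (fun i hi => ?_), mul_one]
  have hi1 : i ≠ i₁ := Finset.ne_of_mem_erase hi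
  have hi0 : i ≠ i₀ := Finset.ne_of_mem_erase (Finset.mem_of_mem_erase hi)
  rw [if_neg hi0, if_neg hi1]

/-- Construction: a suitable scaling root `u`. -/
lemma exists_u {m p n : ℕ} (hm : 0 < m) (hp0 : 0 < p) (hpm : p ∣ m) {η : ℂ}
    (hη : η ^ m = 1) (hηg : η ^ (m / Nat.gcd p n) = 1) :
    ∃ u : ℂ, u ^ m = 1 ∧ (η * u ^ n) ^ (m / p) = 1 := by
  haveI : NeZero m := ⟨hm.ne'⟩
  set g := Nat.gcd p n with hgdef
  have hg0 : 0 < g := Nat.gcd_pos_of_pos_left n hp0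
  have hgm : g ∣ m := (Nat.gcd_dvd_left p n).trans hpm
  have hmg0 : 0 < m / g := Nat.div_pos (Nat.le_of_dvd hm hgm) hg0
  set ε := Complex.exp (2 * Real.pi * Complex.I / m) with hεdef
  have hprim : IsPrimitiveRoot ε m := Complex.isPrimitiveRoot_exp m hm.ne'
  obtain ⟨x, -, hx⟩ := hprim.eq_pow_of_pow_eq_one hη
  -- g ∣ x
  have hdvd1 : m ∣ x * (m / g) := by
    rw [← hprim.pow_eq_one_iff_dvd, pow_mul, hx]
    exact hηg
  have hgx : g ∣ x := by
    have : g * (m / g) ∣ x * (m / g) := by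
      rw [Nat.mul_div_cancel' hgm]; exact hdvd1
    exact (Nat.mul_dvd_mul_iff_right hmg0).1 this
  obtain ⟨x', hx'⟩ := hgx
  set a := Nat.gcdA p n with hadef
  set b := Nat.gcdB p n with hbdef
  have hbez : (g : ℤ) = p * a + n * b := Nat.gcd_eq_gcd_ab p n
  set s : ℤ := -(x' : ℤ) * b with hsdef
  refine ⟨ε ^ s, ?_, ?_⟩
  · rw [← zpow_natCast (ε ^ s) m, ← zpow_mul, mul_comm, zpow_mul, zpow_natCast,
      hprim.pow_eq_one, one_zpow]
  · have hη' : η = ε ^ (x : ℤ) := by rw [zpow_natCast, hx]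
    have hun : (ε ^ s) ^ n = ε ^ (s * n) := by
      rw [← zpow_natCast (ε ^ s) n, ← zpow_mul]
    have hcomb : η * (ε ^ s) ^ n = ε ^ ((x : ℤ) + s * n) := by
      rw [hη', hun, ← zpow_add₀]
      exact hprim.ne_zero hm.ne'
    rw [hcomb, ← zpow_natCast (ε ^ ((x : ℤ) + s * n)) (m / p), ← zpow_mul,
      hprim.zpow_eq_one_iff_dvd]
    have hxs : (x : ℤ) + s * n = (x' : ℤ) * a * p := by
      have : (x : ℤ) = g * x' := by exact_mod_cast hx'
      rw [this, hsdef, hbez]; ring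
    have hpm' : (p : ℤ) * ((m / p : ℕ) : ℤ) = (m : ℤ) := by
      exact_mod_cast Nat.mul_div_cancel' hpm
    rw [hxs]
    refine ⟨(x' : ℤ) * a, ?_⟩
    rw [← hpm']; ring

/-- Necessity: extract the divisibility on the exponent of `η`. -/
lemma eta_pow {m p n : ℕ} (hm : 0 < m) (hp0 : 0 < p) (hpm : p ∣ m)
    (hgn : Nat.gcd p n ∣ n) {η θ : ℂ}
    (hη : η ^ m = 1) (hθ : θ ^ m = 1) (hcond : (η * θ ^ n) ^ (m / p) = 1) :
    η ^ (m / Nat.gcd p n) = 1 := by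
  haveI : NeZero m := ⟨hm.ne'⟩
  set g := Nat.gcd p n with hgdef
  have hg0 : 0 < g := Nat.gcd_pos_of_pos_left n hp0
  have hgm : g ∣ m := (Nat.gcd_dvd_left p n).trans hpm
  have hmp0 : 0 < m / p := Nat.div_pos (Nat.le_of_dvd hm hpm) hp0
  set ε := Complex.exp (2 * Real.pi * Complex.I / m) with hεdef
  have hprim : IsPrimitiveRoot ε m := Complex.isPrimitiveRoot_exp m hm.ne'
  obtain ⟨x, -, hx⟩ := hprim.eq_pow_of_pow_eq_one hη
  obtain ⟨y, -, hy⟩ := hprim.eq_pow_of_pow_eq_one hθ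
  have hη' : η = ε ^ (x : ℤ) := by rw [zpow_natCast, hx]
  have hθ' : θ = ε ^ (y : ℤ) := by rw [zpow_natCast, hy]
  have hcomb : η * θ ^ n = ε ^ ((x : ℤ) + (y : ℤ) * n) := by
    rw [hη', hθ', ← zpow_natCast (ε ^ (y : ℤ)) n, ← zpow_mul, ← zpow_add₀]
    exact hprim.ne_zero hm.ne'
  rw [hcomb, ← zpow_natCast (ε ^ ((x : ℤ) + (y : ℤ) * n)) (m / p), ← zpow_mul,
    hprim.zpow_eq_one_iff_dvd] at hcond
  -- (m : ℤ) ∣ (x + y n) * (m/p)  →  p ∣ x + y n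
  have hpm' : (p : ℤ) * ((m / p : ℕ) : ℤ) = (m : ℤ) := by
    exact_mod_cast Nat.mul_div_cancel' hpm
  have hpdvd : (p : ℤ) ∣ (x : ℤ) + (y : ℤ) * n := by
    have h1 : (p : ℤ) * ((m / p : ℕ) : ℤ) ∣ ((x : ℤ) + (y : ℤ) * n) * ((m / p : ℕ) : ℤ) := by
      rw [hpm']; exact hcond
    have hmp0' : ((m / p : ℕ) : ℤ) ≠ 0 := by exact_mod_cast hmp0.ne'
    exact (mul_dvd_mul_iff_right hmp0').1 h1
  have hgdvdx : (g : ℤ) ∣ (x : ℤ) := by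
    have hgp : (g : ℤ) ∣ (p : ℤ) := Int.natCast_dvd_natCast.2 (Nat.gcd_dvd_left p n)
    have hgn' : (g : ℤ) ∣ (n : ℤ) := Int.natCast_dvd_natCast.2 (Nat.gcd_dvd_right p n)
    have h1 : (g : ℤ) ∣ (x : ℤ) + (y : ℤ) * n := hgp.trans hpdvd
    have h2 : (g : ℤ) ∣ (y : ℤ) * n := Dvd.dvd.mul_left hgn' (y : ℤ)
    simpa using h1.sub h2
  obtain ⟨x₁, hx₁⟩ := hgdvdx
  have hgm' : (g : ℤ) * ((m / g : ℕ) : ℤ) = (m : ℤ) := by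
    exact_mod_cast Nat.mul_div_cancel' hgm
  rw [hη', ← zpow_natCast (ε ^ (x : ℤ)) (m / g), ← zpow_mul,
    hprim.zpow_eq_one_iff_dvd, hx₁]
  exact ⟨x₁, by rw [← hgm']; ring⟩

lemma m_dvd {n m p m' p' : ℕ} (hn : 3 ≤ n) (hm : 0 < m) (hm' : 0 < m')
    (S : Gmpn m p n ⊔ scalarGL n = Gmpn m' p' n ⊔ scalarGL n) : m' ∣ m := by
  haveI : NeZero m' := ⟨hm'.ne'⟩
  set i₀ : Fin n := ⟨0, by omega⟩ with hi₀
  set i₁ : Fin n := ⟨1, by omega⟩ with hi₁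
  set i₂ : Fin n := ⟨2, by omega⟩ with hi₂
  have h01 : i₀ ≠ i₁ := by rw [hi₀, hi₁]; intro hc; simpa using congrArg Fin.val hc
  have h20 : i₂ ≠ i₀ := by rw [hi₀, hi₂]; intro hc; simpa using congrArg Fin.val hc
  have h21 : i₂ ≠ i₁ := by rw [hi₁, hi₂]; intro hc; simpa using congrArg Fin.val hc
  set ζ' := Complex.exp (2 * Real.pi * Complex.I / m') with hζ'def
  have hprim : IsPrimitiveRoot ζ' m' := Complex.isPrimitiveRoot_exp m' hm'.ne'
  have hζne : ζ' ≠ 0 := ne_zero_of_pow_eq_one hm' hprim.pow_eq_one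
  set d : Fin n → ℂ := fun i => if i = i₀ then ζ' else if i = i₁ then ζ'⁻¹ else 1
    with hd
  have hdne : ∀ i, d i ≠ 0 := by
    intro i
    rw [hd]; dsimp only
    split_ifs
    · exact hζne
    · exact inv_ne_zero hζne
    · exact one_ne_zero
  have hmem : diagUnit d hdne ∈ GmpnSub m' p' n := by
    refine diag_mem hdne (fun i => ?_) ?_
    · rw [hd]; dsimp only
      split_ifs
      · exact hprim.pow_eq_one
      · rw [inv_pow, hprim.pow_eq_one, inv_one]
      · exact one_pow _
    · rw [hd]; dsimp only
      rw [prod_pair h01, mul_inv_cancel₀ hζne, one_pow]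
  have hmem2 : diagUnit d hdne ∈ Gmpn m p n ⊔ scalarGL n := by
    rw [S]
    exact SetLike.le_def.1 le_sup_left ((Gmpn_eq m' p' n).symm ▸ hmem)
  obtain ⟨c, ζ, hc0, hζm, -, hdc⟩ := diag_extract hdne hmem2
  have h0 : ζ' = c * ζ i₀ := by
    have := hdc i₀
    simp only [hd] at this
    simpa using this
  have h2 : (1 : ℂ) = c * ζ i₂ := by
    have := hdc i₂
    simp only [hd] at this
    rwa [if_neg h20, if_neg h21] at this
  have hfin : ζ' ^ m = 1 := by
    calc ζ' ^ m = c ^ m * ζ i₀ ^ m := by rw [h0, mul_pow]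
    _ = c ^ m := by rw [hζm, mul_one]
    _ = c ^ m * ζ i₂ ^ m := by rw [hζm, mul_one]
    _ = 1 := by rw [← mul_pow, ← h2, one_pow]
  exact (hprim.pow_eq_one_iff_dvd m).1 hfin

lemma gcd_div_dvd {n m p p' : ℕ} (hn : 3 ≤ n) (hm : 0 < m)
    (hp : 0 < p) (hp' : 0 < p') (hpm : p ∣ m) (hpm' : p' ∣ m)
    (S : Gmpn m p n ⊔ scalarGL n = Gmpn m p' n ⊔ scalarGL n) :
    (m / Nat.gcd p' n) ∣ (m / Nat.gcd p n) := by
  set i₀ : Fin n := ⟨0, by omega⟩ with hi₀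
  set i₁ : Fin n := ⟨1, by omega⟩ with hi₁
  have h10 : i₁ ≠ i₀ := by rw [hi₀, hi₁]; intro hc; simpa using congrArg Fin.val hc
  set g' := Nat.gcd p' n with hg'def
  have hg'0 : 0 < g' := Nat.gcd_pos_of_pos_left n hp'
  have hg'm : g' ∣ m := (Nat.gcd_dvd_left p' n).trans hpm'
  have hq0 : 0 < m / g' := Nat.div_pos (Nat.le_of_dvd hm hg'm) hg'0
  set η := Complex.exp (2 * Real.pi * Complex.I / (m / g' : ℕ)) with hηdef
  have hprim : IsPrimitiveRoot η (m / g') := Complex.isPrimitiveRoot_exp _ hq0.ne'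
  have hηg : η ^ (m / g') = 1 := hprim.pow_eq_one
  have hηm : η ^ m = 1 := by
    obtain ⟨k, hk⟩ := Nat.div_dvd_of_dvd hg'm
    rw [hk, pow_mul, hηg, one_pow]
  have hη0 : η ≠ 0 := ne_zero_of_pow_eq_one hm hηm
  obtain ⟨u, hum, hcond⟩ := exists_u hm hp' hpm' hηm hηg
  have hu0 : u ≠ 0 := ne_zero_of_pow_eq_one hm hum
  set dζ : Fin n → ℂ := fun i => if i = i₀ then η * u else u with hdζ
  have hdζ0 : ∀ i, dζ i ≠ 0 := by
    intro i; rw [hdζ]; dsimp only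
    split_ifs
    · exact mul_ne_zero hη0 hu0
    · exact hu0
  have hn1 : n - 1 + 1 = n := by omega
  have hmemζ : diagUnit dζ hdζ0 ∈ GmpnSub m p' n := by
    refine diag_mem hdζ0 (fun i => ?_) ?_
    · rw [hdζ]; dsimp only
      split_ifs
      · rw [mul_pow, hηm, hum, one_mul]
      · exact hum
    · rw [hdζ]; dsimp only
      rw [prod_single i₀ (η * u) u, mul_assoc, ← pow_succ', hn1]
      exact hcond
  set cu : ℂˣ := Units.mk0 u hu0 with hcu
  set z := Units.map (algebraMap ℂ (Matrix (Fin n) (Fin n) ℂ)).toMonoidHom cu⁻¹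
    with hzdef
  set dη : Fin n → ℂ := fun i => if i = i₀ then η else 1 with hdη
  have hdη0 : ∀ i, dη i ≠ 0 := by
    intro i; rw [hdη]; dsimp only
    split_ifs
    · exact hη0
    · exact one_ne_zero
  have hcuinv : ((cu⁻¹ : ℂˣ) : ℂ) = u⁻¹ := by rw [hcu]; rfl
  have heq : diagUnit dη hdη0 = diagUnit dζ hdζ0 * z := by
    apply Units.ext
    rw [Units.val_mul, diagUnit_coe, diagUnit_coe, hzdef, scalar_coe,
      Matrix.diagonal_mul_diagonal]
    have hfun : (fun i => dζ i * ((cu⁻¹ : ℂˣ) : ℂ)) = dη := by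
      funext i
      simp only [hdζ, hdη, hcuinv]
      split_ifs
      · rw [mul_assoc, mul_inv_cancel₀ hu0, mul_one]
      · rw [mul_inv_cancel₀ hu0]
    rw [hfun]
  have hzmem : z ∈ scalarGL n := ⟨cu⁻¹, rfl⟩
  have hmem2 : diagUnit dη hdη0 ∈ Gmpn m p n ⊔ scalarGL n := by
    rw [S, heq]
    exact mul_mem (SetLike.le_def.1 le_sup_left ((Gmpn_eq m p' n).symm ▸ hmemζ))
      (SetLike.le_def.1 le_sup_right hzmem)
  obtain ⟨c, ζ, hc0, hζm, hζp, hdc⟩ := diag_extract hdη0 hmem2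
  have h0 : η = c * ζ i₀ := by
    have := hdc i₀
    simp only [hdη] at this
    simpa using this
  have hothers : ∀ i, i ≠ i₀ → ζ i = c⁻¹ := by
    intro i hi
    have := hdc i
    simp only [hdη] at this
    rw [if_neg hi] at this
    exact (inv_eq_of_mul_eq_one_right this.symm).symm
  set θ := ζ i₁ with hθdef
  have hθc : θ = c⁻¹ := hothers i₁ h10
  have hζ0 : ζ i₀ = η * θ := by
    rw [hθc, h0, mul_comm c (ζ i₀), mul_assoc, mul_inv_cancel₀ hc0, mul_one]
  have hζform : ∀ i, ζ i = if i = i₀ then η * θ else θ := by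
    intro i
    split_ifs with hcase
    · rw [hcase]; exact hζ0
    · rw [hothers i hcase, hθc]
  have hprodζ : ∏ i, ζ i = η * θ ^ n := by
    rw [Finset.prod_congr rfl (fun i _ => hζform i), prod_single i₀ (η * θ) θ,
      mul_assoc, ← pow_succ', hn1]
  have hfin : η ^ (m / Nat.gcd p n) = 1 := by
    refine eta_pow hm hp hpm (Nat.gcd_dvd_right p n) hηm (hζm i₁) ?_
    rw [← hprodζ]
    exact hζp
  exact (hprim.pow_eq_one_iff_dvd _).1 hfin


/-- For `n ≥ 3`, if `G(m,p,n)` and `G(m',p',n)` have the same image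
in `PGL_n(ℂ)`, then `m = m'` and `gcd(p,n) = gcd(p',n)`. -/
theorem statement6 (n m p m' p' : ℕ) (hn : 3 ≤ n)
    (hm : 0 < m) (hp : 0 < p) (hm' : 0 < m') (hp' : 0 < p')
    (hpm : p ∣ m) (hpm' : p' ∣ m')
    (h : (Gmpn m p n).map (QuotientGroup.mk' (scalarGL n)) =
      (Gmpn m' p' n).map (QuotientGroup.mk' (scalarGL n))) :
    m = m' ∧ Nat.gcd p n = Nat.gcd p' n := by
  have S := sup_eq h
  have hmm' : m = m' := Nat.dvd_antisymm (m_dvd hn hm' hm S.symm) (m_dvd hn hm hm' S)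
  subst hmm'
  refine ⟨rfl, ?_⟩
  have h1 := gcd_div_dvd hn hm hp hp' hpm hpm' S
  have h2 := gcd_div_dvd hn hm hp' hp hpm' hpm S.symm
  have heq : m / Nat.gcd p n = m / Nat.gcd p' n := Nat.dvd_antisymm h2 h1
  have hgm : Nat.gcd p n ∣ m := (Nat.gcd_dvd_left p n).trans hpm
  have hgm' : Nat.gcd p' n ∣ m := (Nat.gcd_dvd_left p' n).trans hpm'
  have hmul : Nat.gcd p n * (m / Nat.gcd p n) = Nat.gcd p' n * (m / Nat.gcd p' n) := by
    rw [Nat.mul_div_cancel' hgm, Nat.mul_div_cancel' hgm']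
  rw [heq] at hmul
  exact Nat.eq_of_mul_eq_mul_right
    (Nat.div_pos (Nat.le_of_dvd hm hgm') (Nat.gcd_pos_of_pos_left n hp')) hmul

end CPRG
end
end
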